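/- Godsil–McKay switching preserves the spectrum: Let Γ be a finite graph with vertex set X, and let {C₁, …, C_t, D} be a partition of X such that {C₁, …, C_t} is an equitable partition of the induced subgraph of Γ on X \ D, and such that every vertex x ∈ D has either 0, |C_i|/2, or |C_i| neighbors in each C_i. Let Γ' be the graph obtained from Γ by interchanging adjacency and nonadjacency between x and C_i whenever x ∈ D has exactly |C_i|/2 neighbors in C_i. Then Γ and Γ' are cospectral, i.e., their adjacency matrices have the same characteristic polynomial. -/
import Mathlib

section GMHelpers

open Finset Matrix Polynomial

set_option linter.unusedSectionVars false

section GM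

variable {X : Type*} [Fintype X] [DecidableEq X] {t : ℕ}

noncomputable def gmQ (C : Fin t → Finset X) (D : Finset X) : Matrix X X ℚ :=
  fun x y =>
    if x ∈ D then (if x = y then 1 else 0)
    else (if h : ∃ i, x ∈ C i ∧ y ∈ C i then 2 / ((C (Classical.choose h)).card : ℚ) else 0)
      - (if x = y then 1 else 0)

variable {C : Fin t → Finset X} {D : Finset X}
  (hpart : ∀ x : X, x ∉ D ↔ ∃! i, x ∈ C i)
  (hCD : ∀ i, Disjoint (C i) D)

lemma gmQ_of_D {x : X} (hx : x ∈ D) (y : X) :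
    gmQ C D x y = if x = y then 1 else 0 := by
  simp [gmQ, hx]

include hpart hCD in
lemma cell_unique {x : X} {i j : Fin t} (hx : x ∈ C i) (hx' : x ∈ C j) : i = j := by
  have hxD : x ∉ D := Finset.disjoint_left.mp (hCD i) hx
  obtain ⟨k, -, hk⟩ := (hpart x).mp hxD
  rw [hk i hx, hk j hx']

include hpart hCD in
lemma gmQ_of_mem {x : X} {i : Fin t} (hx : x ∈ C i) (y : X) :
    gmQ C D x y = (if y ∈ C i then 2 / ((C i).card : ℚ) else 0)
      - (if x = y then 1 else 0) := by
  have hxD : x ∉ D := Finset.disjoint_left.mp (hCD i) hx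
  rw [gmQ, if_neg hxD]
  congr 1
  by_cases hy : y ∈ C i
  · rw [dif_pos ⟨i, hx, hy⟩, if_pos hy]
    have h : ∃ j, x ∈ C j ∧ y ∈ C j := ⟨i, hx, hy⟩
    have := cell_unique hpart hCD (Classical.choose_spec h).1 hx
    rw [this]
  · rw [if_neg hy, dif_neg]
    rintro ⟨j, hxj, hyj⟩
    exact hy (cell_unique hpart hCD hxj hx ▸ hyj)

include hpart hCD in
lemma gmQ_symm (x y : X) : gmQ C D x y = gmQ C D y x := by
  by_cases hx : x ∈ D <;> by_cases hy : y ∈ D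
  · rw [gmQ_of_D hx, gmQ_of_D hy]; simp [eq_comm]
  · obtain ⟨i, hi, -⟩ := (hpart y).mp hy
    rw [gmQ_of_D hx, gmQ_of_mem hpart hCD hi]
    have hne : y ≠ x := fun h => hy (h ▸ hx)
    have hxi : x ∉ C i := fun h => (Finset.disjoint_left.mp (hCD i) h) hx
    simp [hxi, hne, hne.symm]
  · obtain ⟨i, hi, -⟩ := (hpart x).mp hx
    rw [gmQ_of_D hy, gmQ_of_mem hpart hCD hi]
    have hne : x ≠ y := fun h => hx (h ▸ hy)
    have hyi : y ∉ C i := fun h => (Finset.disjoint_left.mp (hCD i) h) hy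
    simp [hyi, hne, hne.symm]
  · obtain ⟨i, hi, -⟩ := (hpart x).mp hx
    obtain ⟨j, hj, -⟩ := (hpart y).mp hy
    rw [gmQ_of_mem hpart hCD hi, gmQ_of_mem hpart hCD hj]
    by_cases hyx : y ∈ C i
    · have : j = i := cell_unique hpart hCD hj hyx
      subst this
      simp [hi, hyx, eq_comm]
    · have hxj : x ∉ C j := fun h => hyx (cell_unique hpart hCD hj (by
        exact (cell_unique hpart hCD h hi) ▸ hj) ▸ hj)
      simp [hyx, hxj, eq_comm]

include hpart hCD in
lemma gmQ_row_sum {x : X} {i : Fin t} (hx : x ∈ C i) (f : X → ℚ) :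
    ∑ y, gmQ C D x y * f y = (2 / ((C i).card : ℚ)) * ∑ y ∈ C i, f y - f x := by
  simp only [gmQ_of_mem hpart hCD hx, sub_mul, ite_mul, zero_mul, one_mul]
  rw [Finset.sum_sub_distrib]
  congr 1
  · rw [Finset.mul_sum, Finset.sum_ite_mem, Finset.univ_inter]
  · simp

lemma gmQ_row_sum_D {x : X} (hx : x ∈ D) (f : X → ℚ) :
    ∑ y, gmQ C D x y * f y = f x := by
  simp [gmQ_of_D hx, ite_mul]

include hpart hCD in
lemma gmQ_cell_sum {i : Fin t} (z : X) :
    ∑ y ∈ C i, gmQ C D y z = if z ∈ C i then 1 else 0 := by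
  rw [Finset.sum_congr rfl fun y hy => gmQ_of_mem hpart hCD hy z,
    Finset.sum_sub_distrib, Finset.sum_const, Finset.sum_ite_eq']
  by_cases hz : z ∈ C i
  · have hn : ((C i).card : ℚ) ≠ 0 := by
      exact_mod_cast Finset.card_ne_zero.mpr ⟨z, hz⟩
    simp only [hz, if_pos, nsmul_eq_mul]
    field_simp
    ring
  · simp [hz]

include hpart hCD in
lemma gmQ_mul_self : gmQ C D * gmQ C D = 1 := by
  ext x z
  rw [Matrix.mul_apply]
  by_cases hx : x ∈ D
  · rw [gmQ_row_sum_D hx, gmQ_of_D hx, Matrix.one_apply]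
  · obtain ⟨i, hi, -⟩ := (hpart x).mp hx
    rw [gmQ_row_sum hpart hCD hi, gmQ_cell_sum hpart hCD, gmQ_of_mem hpart hCD hi,
      Matrix.one_apply]
    by_cases hz : z ∈ C i <;> by_cases hxz : x = z <;> simp [hz, hxz]

lemma charpoly_conj_self (A P : Matrix X X ℚ) (h : P * P = 1) :
    (P * A * P).charpoly = A.charpoly := by
  let mp : Matrix X X ℚ →+* Matrix X X ℚ[X] := (Polynomial.C : ℚ →+* ℚ[X]).mapMatrix
  have h1 : mp P * mp P = 1 := by rw [← mp.map_mul, h, mp.map_one]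
  have hmp : mp (P * A * P) = mp P * mp A * mp P := by
    rw [mp.map_mul, mp.map_mul]
  have hc : Matrix.charmatrix (P * A * P) = mp P * Matrix.charmatrix A * mp P := by
    have hcomm : Matrix.scalar X (Polynomial.X : ℚ[X]) * mp P
        = mp P * Matrix.scalar X (Polynomial.X : ℚ[X]) :=
      (Matrix.scalar_commute _ (fun r' => Commute.all _ _) _).eq
    show Matrix.scalar X (Polynomial.X : ℚ[X]) - mp (P * A * P)
      = mp P * (Matrix.scalar X (Polynomial.X : ℚ[X]) - mp A) * mp P
    rw [mul_sub, sub_mul, ← hcomm, mul_assoc _ (mp P) (mp P), h1, mul_one, hmp]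
  rw [Matrix.charpoly, Matrix.charpoly, hc, Matrix.det_mul, Matrix.det_mul]
  have : (mp P).det * (mp P).det = 1 := by rw [← Matrix.det_mul, h1, Matrix.det_one]
  calc (mp P).det * (Matrix.charmatrix A).det * (mp P).det
      = (Matrix.charmatrix A).det * ((mp P).det * (mp P).det) := by ring
    _ = (Matrix.charmatrix A).det := by rw [this, mul_one]

lemma card_inter_eq (Γ : SimpleGraph X) [DecidableRel Γ.Adj] (y : X) (S : Finset X) :
    (Γ.neighborFinset y ∩ S).card = ∑ w ∈ S, if Γ.Adj y w then 1 else 0 := by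
  have : Γ.neighborFinset y ∩ S = S.filter (fun w => Γ.Adj y w) := by
    ext w; simp [SimpleGraph.mem_neighborFinset, and_comm]
  rw [this, Finset.card_filter]

lemma adj_sum (Γ : SimpleGraph X) [DecidableRel Γ.Adj] (y : X) (S : Finset X) :
    ∑ w ∈ S, Γ.adjMatrix ℚ y w = ((Γ.neighborFinset y ∩ S).card : ℚ) := by
  rw [card_inter_eq]
  push_cast
  simp [SimpleGraph.adjMatrix_apply, apply_ite (Nat.cast : ℕ → ℚ)]

lemma double_count (Γ : SimpleGraph X) [DecidableRel Γ.Adj] (S T : Finset X) :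
    ∑ y ∈ S, (Γ.neighborFinset y ∩ T).card = ∑ w ∈ T, (Γ.neighborFinset w ∩ S).card := by
  simp only [card_inter_eq]
  rw [Finset.sum_comm]
  exact Finset.sum_congr rfl fun w _ => Finset.sum_congr rfl fun y _ => if_congr (Γ.adj_comm y w) rfl rfl

end GM

end GMHelpers



open Finset

/-- In Godsil–McKay switching, adjacency between `x` and `y` is interchanged exactly when
one of them lies in `D` and the other lies in a cell `C i` of which the first has exactly
half as neighbours. -/
def GMFlip {X : Type*} [Fintype X] [DecidableEq X] (Γ : SimpleGraph X) [DecidableRel Γ.Adj]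
    {t : ℕ} (C : Fin t → Finset X) (D : Finset X) (x y : X) : Prop :=
  ∃ i, (x ∈ D ∧ y ∈ C i ∧ 2 * (Γ.neighborFinset x ∩ C i).card = (C i).card) ∨
       (y ∈ D ∧ x ∈ C i ∧ 2 * (Γ.neighborFinset y ∩ C i).card = (C i).card)

/-- **Godsil–McKay switching preserves the spectrum.** -/
theorem godsil_mckay_switching {X : Type*} [Fintype X] [DecidableEq X]
    (Γ Γ' : SimpleGraph X) [DecidableRel Γ.Adj] [DecidableRel Γ'.Adj]
    {t : ℕ} (C : Fin t → Finset X) (D : Finset X)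
    -- `{C 1, …, C t, D}` is a partition of the vertex set `X`
    (hpart : ∀ x : X, x ∉ D ↔ ∃! i, x ∈ C i)
    (hCD : ∀ i, Disjoint (C i) D)
    -- `{C 1, …, C t}` is an equitable partition of the induced subgraph of `Γ` on `X \ D`
    (hequit : ∀ i j, ∀ x ∈ C i, ∀ y ∈ C i,
      (Γ.neighborFinset x ∩ C j).card = (Γ.neighborFinset y ∩ C j).card)
    -- every vertex of `D` has `0`, `|C i|/2`, or `|C i|` neighbours in each `C i`
    (hhalf : ∀ x ∈ D, ∀ i, (Γ.neighborFinset x ∩ C i).card = 0 ∨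
      2 * (Γ.neighborFinset x ∩ C i).card = (C i).card ∨
      (Γ.neighborFinset x ∩ C i).card = (C i).card)
    -- `Γ'` is obtained from `Γ` by interchanging the switched adjacencies
    (hswitch : ∀ x y, Γ'.Adj x y ↔
      ((GMFlip Γ C D x y ∧ x ≠ y ∧ ¬ Γ.Adj x y) ∨ (¬ GMFlip Γ C D x y ∧ Γ.Adj x y))) :
    (Γ.adjMatrix ℚ).charpoly = (Γ'.adjMatrix ℚ).charpoly := by
  classical
  set A := Γ.adjMatrix ℚ with hAdef
  set A' := Γ'.adjMatrix ℚ with hA'def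
  set Q := gmQ C D with hQdef
  -- entries of A * Q
  have hflipAQ : ∀ (y z : X), A y z * Q z z = Q z z * A y z := fun y z => mul_comm _ _
  have hAQ : ∀ y z, (A * Q) y z = ∑ w, Q z w * A y w := by
    intro y z
    rw [Matrix.mul_apply]
    exact Finset.sum_congr rfl fun w _ => by
      rw [hQdef, gmQ_symm hpart hCD w z, mul_comm]
  have hAQ_D : ∀ y z, z ∈ D → (A * Q) y z = A y z := by
    intro y z hz
    rw [hAQ, gmQ_row_sum_D hz]
  have hAQ_C : ∀ y z j, z ∈ C j →
      (A * Q) y z = 2 / ((C j).card : ℚ) * ((Γ.neighborFinset y ∩ C j).card : ℚ) - A y z := by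
    intro y z j hz
    rw [hAQ, gmQ_row_sum hpart hCD hz, adj_sum]
  -- A' entries
  have hA'eq : ∀ x z, ¬ GMFlip Γ C D x z → A' x z = A x z := by
    intro x z hf
    have : Γ'.Adj x z ↔ Γ.Adj x z := by rw [hswitch]; simp [hf]
    simp [hAdef, hA'def, SimpleGraph.adjMatrix_apply, this]
  have hA'flip : ∀ x z, GMFlip Γ C D x z → x ≠ z → A' x z = 1 - A x z := by
    intro x z hf hxz
    by_cases hadj : Γ.Adj x z
    · have h' : ¬ Γ'.Adj x z := by rw [hswitch]; simp [hf, hadj]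
      simp [hAdef, hA'def, SimpleGraph.adjMatrix_apply, h', hadj]
    · have h' : Γ'.Adj x z := by rw [hswitch]; exact Or.inl ⟨hf, hxz, hadj⟩
      simp [hAdef, hA'def, SimpleGraph.adjMatrix_apply, h', hadj]
  -- the case x ∈ D
  have main : ∀ x z, x ∈ D → (Q * A * Q) x z = A' x z := by
    intro x z hx
    rw [mul_assoc, Matrix.mul_apply, gmQ_row_sum_D hx]
    by_cases hzD : z ∈ D
    · rw [hAQ_D x z hzD]
      refine (hA'eq x z ?_).symm
      rintro ⟨i, ⟨-, hzi, -⟩ | ⟨-, hxi, -⟩⟩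
      · exact Finset.disjoint_left.mp (hCD i) hzi hzD
      · exact Finset.disjoint_left.mp (hCD i) hxi hx
    · obtain ⟨j, hzj, -⟩ := (hpart z).mp hzD
      rw [hAQ_C x z j hzj]
      have hm0 : (C j).card ≠ 0 := Finset.card_ne_zero.mpr ⟨z, hzj⟩
      have hm : ((C j).card : ℚ) ≠ 0 := Nat.cast_ne_zero.mpr hm0
      rcases hhalf x hx j with h0 | h2 | h3
      · have hadj : ¬ Γ.Adj x z := by
          intro ha
          have hmem : z ∈ Γ.neighborFinset x ∩ C j :=
            Finset.mem_inter.mpr ⟨(Γ.mem_neighborFinset x z).mpr ha, hzj⟩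
          rw [Finset.card_eq_zero.mp h0] at hmem
          exact absurd hmem (Finset.notMem_empty z)
        have noflip : ¬ GMFlip Γ C D x z := by
          rintro ⟨i, ⟨-, hzi, hhi⟩ | ⟨hzD', -, -⟩⟩
          · have hij := cell_unique hpart hCD hzi hzj
            subst hij
            omega
          · exact hzD hzD'
        rw [hA'eq x z noflip]
        simp [hAdef, SimpleGraph.adjMatrix_apply, hadj, h0]
      · have flip : GMFlip Γ C D x z := ⟨j, Or.inl ⟨hx, hzj, h2⟩⟩
        have hxz : x ≠ z := fun h => hzD (h ▸ hx)
        have hk : 2 / ((C j).card : ℚ) * ((Γ.neighborFinset x ∩ C j).card : ℚ) = 1 := by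
          have h2' : ((C j).card : ℚ) = 2 * ((Γ.neighborFinset x ∩ C j).card : ℚ) := by
            exact_mod_cast h2.symm
          have hk0 : ((Γ.neighborFinset x ∩ C j).card : ℚ) ≠ 0 := by
            intro h; rw [h, mul_zero] at h2'; exact hm h2'
          rw [h2']
          field_simp
        rw [hk, hA'flip x z flip hxz]
      · have hsub : Γ.neighborFinset x ∩ C j = C j :=
          Finset.eq_of_subset_of_card_le Finset.inter_subset_right (le_of_eq h3.symm)
        have hadj : Γ.Adj x z :=
          (Γ.mem_neighborFinset x z).mp (Finset.mem_inter.mp (hsub ▸ hzj)).1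
        have noflip : ¬ GMFlip Γ C D x z := by
          rintro ⟨i, ⟨-, hzi, hhi⟩ | ⟨hzD', -, -⟩⟩
          · have hij := cell_unique hpart hCD hzi hzj
            subst hij
            omega
          · exact hzD hzD'
        rw [hA'eq x z noflip, h3]
        have : 2 / ((C j).card : ℚ) * ((C j).card : ℚ) = 2 := by field_simp
        rw [this]
        simp [hAdef, SimpleGraph.adjMatrix_apply, hadj]
        norm_num
  -- the case x, z ∉ D
  have main2 : ∀ x z, x ∉ D → z ∉ D → (Q * A * Q) x z = A' x z := by
    intro x z hxD hzD
    obtain ⟨i, hxi, -⟩ := (hpart x).mp hxD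
    obtain ⟨j, hzj, -⟩ := (hpart z).mp hzD
    have hn : ((C i).card : ℚ) ≠ 0 := Nat.cast_ne_zero.mpr (Finset.card_ne_zero.mpr ⟨x, hxi⟩)
    have hm : ((C j).card : ℚ) ≠ 0 := Nat.cast_ne_zero.mpr (Finset.card_ne_zero.mpr ⟨z, hzj⟩)
    set k := (Γ.neighborFinset x ∩ C j).card with hkdef
    set l := (Γ.neighborFinset z ∩ C i).card with hldef
    have hsum : ∑ y ∈ C i, (A * Q) y z
        = ((C i).card : ℚ) * (2 / ((C j).card : ℚ) * (k : ℚ)) - (l : ℚ) := by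
      have step : ∀ y ∈ C i, (A * Q) y z = 2 / ((C j).card : ℚ) * (k : ℚ) - A y z := by
        intro y hy
        rw [hAQ_C y z j hzj, hequit i j y hy x hxi]
      rw [Finset.sum_congr rfl step, Finset.sum_sub_distrib, Finset.sum_const, nsmul_eq_mul]
      congr 1
      have hsymA : ∀ y, A y z = A z y := by
        intro y
        simp [hAdef, SimpleGraph.adjMatrix_apply, Γ.adj_comm]
      rw [Finset.sum_congr rfl fun y _ => hsymA y, adj_sum]
    have hcount : (C i).card * k = (C j).card * l := by
      have h1 : ∑ y ∈ C i, (Γ.neighborFinset y ∩ C j).card = (C i).card * k := by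
        rw [Finset.sum_congr rfl fun y hy => hequit i j y hy x hxi, Finset.sum_const,
          smul_eq_mul]
      have h2 : ∑ w ∈ C j, (Γ.neighborFinset w ∩ C i).card = (C j).card * l := by
        rw [Finset.sum_congr rfl fun w hw => hequit j i w hw z hzj, Finset.sum_const,
          smul_eq_mul]
      rw [← h1, ← h2, double_count]
    have hrat : 2 / ((C j).card : ℚ) * (k : ℚ) = 2 / ((C i).card : ℚ) * (l : ℚ) := by
      rw [div_mul_eq_mul_div, div_mul_eq_mul_div, div_eq_div_iff hm hn]
      have : ((C i).card : ℚ) * (k : ℚ) = ((C j).card : ℚ) * (l : ℚ) := by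
        exact_mod_cast hcount
      linarith [this]
    have noflip : ¬ GMFlip Γ C D x z := by
      rintro ⟨i', ⟨hxD', -, -⟩ | ⟨hzD', -, -⟩⟩
      · exact hxD hxD'
      · exact hzD hzD'
    rw [mul_assoc, Matrix.mul_apply, gmQ_row_sum hpart hCD hxi, hsum,
      hAQ_C x z j hzj, hA'eq x z noflip, hrat]
    field_simp
    ring
  -- conclusion
  have hQt : ∀ x z, (Q * A * Q) x z = (Q * A * Q) z x := by
    intro x z
    have h1 : Matrix.transpose (Q * A * Q) = Q * A * Q := by
      rw [Matrix.transpose_mul, Matrix.transpose_mul]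
      rw [show Matrix.transpose Q = Q from Matrix.ext fun a b => gmQ_symm hpart hCD b a,
        show Matrix.transpose A = A from Γ.transpose_adjMatrix]
      rw [mul_assoc]
    conv_rhs => rw [← h1]
    rfl
  have hA't : ∀ x z, A' x z = A' z x := by
    intro x z
    simp [hA'def, SimpleGraph.adjMatrix_apply, Γ'.adj_comm]
  have key : Q * A * Q = A' := by
    ext x z
    by_cases hx : x ∈ D
    · exact main x z hx
    · by_cases hz : z ∈ D
      · rw [hQt x z, hA't x z]
        exact main z x hz
      · exact main2 x z hx hz
  rw [← key]
  exact (charpoly_conj_self A Q (gmQ_mul_self hpart hCD)).symm
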